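/- If a tile assembly system is such that every producible assembly has at most one frontier location and at most one tile type attachable at that location, then the set of producible assemblies is totally ordered by the subassembly relation. -/

import Mathlib

inductive Dir | N | E | S | W
deriving DecidableEq

instance : Fintype Dir :=
  ⟨{.N, .E, .S, .W}, by intro d; cases d <;> decide⟩

def Dir.opp : Dir → Dir
  | .N => .S | .S => .N | .E => .W | .W => .E

def Dir.vec : Dir → ℤ × ℤ
  | .N => (0, 1) | .S => (0, -1) | .E => (1, 0) | .W => (-1, 0)

structure Glue where
  label : String
  strength : ℕ
deriving DecidableEq

abbrev Tile := Dir → Glue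
abbrev Config := ℤ × ℤ → Option Tile

attribute [local instance] Classical.propDecidable

def boundSides (α : Config) (p : ℤ × ℤ) (t : Tile) : Finset Dir :=
  Finset.univ.filter (fun d =>
    (t d).strength ≠ 0 ∧ ∃ t', α (p + d.vec) = some t' ∧ t' d.opp = t d)

/-- Temperature-2 stable attachment of tile `t` at empty location `p`. -/
def Attaches (T : Set Tile) (α : Config) (p : ℤ × ℤ) (t : Tile) : Prop :=
  t ∈ T ∧ α p = none ∧ 2 ≤ ∑ d ∈ boundSides α p t, (t d).strength

inductive Producible (T : Set Tile) (σ : Config) : Config → Prop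
  | seed : Producible T σ σ
  | attach {α : Config} {p : ℤ × ℤ} {t : Tile} :
      Producible T σ α → Attaches T α p t →
      Producible T σ (Function.update α p (some t))

/-- The subassembly relation: `α ⊑ β` iff `dom α ⊆ dom β` and they agree on
`dom α`. -/
def Subassembly (α β : Config) : Prop :=
  ∀ p t, α p = some t → β p = some t

/-
Under the determinism hypothesis, every producible assembly has at most one successor, so the
producible assemblies form a single path of attachments out of the seed; two points on one path
are reachable one from the other, and reachability by attachments only adds tiles.
-/

theorem Subassembly.refl (α : Config) : Subassembly α α := fun _ _ h => h

theorem Subassembly.trans {α β γ : Config} (hαβ : Subassembly α β) (hβγ : Subassembly β γ) :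
    Subassembly α γ := fun p t h => hβγ p t (hαβ p t h)

theorem subassembly_update_of_eq_none {α : Config} {p : ℤ × ℤ} (hp : α p = none)
    (o : Option Tile) : Subassembly α (Function.update α p o) := by
  intro q t hq
  have hqp : q ≠ p := by rintro rfl; simp [hp] at hq
  rwa [Function.update_of_ne hqp]

/-- Requiring the source to be producible turns determinism into global right-uniqueness. -/
def ProducibleStep (T : Set Tile) (σ α β : Config) : Prop :=
  Producible T σ α ∧ ∃ p t, Attaches T α p t ∧ β = Function.update α p (some t)

section

variable {T : Set Tile} {σ : Config}

open Relation

theorem Producible.reflTransGen_producibleStep {α : Config} (h : Producible T σ α) :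
    ReflTransGen (ProducibleStep T σ) σ α := by
  induction h with
  | seed => exact .refl
  | attach hα hatt ih => exact ih.tail ⟨hα, _, _, hatt, rfl⟩

theorem ProducibleStep.subassembly {α β : Config} (h : ProducibleStep T σ α β) :
    Subassembly α β := by
  obtain ⟨-, p, t, hatt, rfl⟩ := h
  exact subassembly_update_of_eq_none hatt.2.1 _

theorem subassembly_of_reflTransGen_producibleStep {α β : Config}
    (h : ReflTransGen (ProducibleStep T σ) α β) : Subassembly α β := by
  induction h with
  | refl => exact .refl α
  | tail _ hstep ih => exact ih.trans hstep.subassembly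

theorem rightUnique_producibleStep
    (hdet : ∀ α, Producible T σ α → ∀ p t p' t',
      Attaches T α p t → Attaches T α p' t' → p = p' ∧ t = t') :
    Relator.RightUnique (ProducibleStep T σ) := by
  rintro α _ _ ⟨hα, p, t, hatt, rfl⟩ ⟨-, p', t', hatt', rfl⟩
  obtain ⟨rfl, rfl⟩ := hdet α hα p t p' t' hatt hatt'
  rfl

end

/-- If for every producible assembly at most one location admits a tile
attachment and at most one tile type can attach there, then any two producible
assemblies are comparable under the subassembly relation. -/
theorem deterministic_attachment_total_order
    (T : Set Tile) (σ : Config)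
    (hdet : ∀ α, Producible T σ α → ∀ p t p' t',
      Attaches T α p t → Attaches T α p' t' → p = p' ∧ t = t') :
    ∀ α β, Producible T σ α → Producible T σ β →
      Subassembly α β ∨ Subassembly β α := by
  intro α β hα hβ
  exact (Relation.ReflTransGen.total_of_right_unique (rightUnique_producibleStep hdet)
    hα.reflTransGen_producibleStep hβ.reflTransGen_producibleStep).imp
    subassembly_of_reflTransGen_producibleStep subassembly_of_reflTransGen_producibleStep
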